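/- arXiv:2309.09182 — 3 statements merged into one kernel-verified Lean document; each statement's English description precedes it below -/
import Mathlib

section
/- The LTL heuristic h_LTL(s,q) = min over t ∈ V of [c(s,t) + g(ℓ(t), T(q, ℓ(t)))] is consistent in the case where the automaton state does not change: if T(q_x, ℓ(s_y)) = q_x, then h_LTL(s_x, q_x) ≤ c(s_x, s_y) + h_LTL(s_y, q_x). -/
/-! `h_LTL(·, q)` is a minimum over targets `t` of `c(·, t)` plus a weight depending only on `t`
and `q`, so the triangle inequality for `c` makes it 1-Lipschitz for `c`. -/

theorem Finset.inf'_add_le_add_inf'_of_triangle {V α : Type*} [AddCommMonoid α] [LinearOrder α]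
    [IsOrderedAddMonoid α] (S : Finset V) (hS : S.Nonempty) (c : V → V → α)
    (htri : ∀ s s' s'' : V, c s s' ≤ c s s'' + c s'' s') (w : V → α) (x y : V) :
    S.inf' hS (fun t => c x t + w t) ≤ c x y + S.inf' hS (fun t => c y t + w t) := by
  obtain ⟨t, ht, hmin⟩ := S.exists_mem_eq_inf' hS (fun t => c y t + w t)
  calc S.inf' hS (fun t => c x t + w t)
      ≤ c x t + w t := S.inf'_le _ ht
    _ ≤ c x y + c y t + w t := add_le_add_left (htri x t y) _
    _ = c x y + S.inf' hS (fun t => c y t + w t) := by rw [hmin, add_assoc]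

theorem stmt2_general {V L Q : Type*} [Fintype V] [Nonempty V]
    (ℓ : V → L) (c : V → V → ℝ)
    (htri : ∀ s s' s'' : V, c s s' ≤ c s s'' + c s'' s')
    (T : Q → L → Q) (g : L → Q → ℝ)
    (hLTL : V → Q → ℝ)
    (hdef : ∀ (s : V) (q : Q),
      hLTL s q = Finset.univ.inf' Finset.univ_nonempty
        (fun t : V => c s t + g (ℓ t) (T q (ℓ t))))
    (s_x s_y : V) (q_x : Q) :
    hLTL s_x q_x ≤ c s_x s_y + hLTL s_y q_x := by
  rw [hdef, hdef]
  exact Finset.univ.inf'_add_le_add_inf'_of_triangle _ c htri _ s_x s_y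

/-- The LTL heuristic `h_LTL(s,q) = min_{t∈V} [c(s,t) + g(ℓ(t), T(q, ℓ(t)))]` is
consistent in the case where the automaton state does not change:
if `T(q_x, ℓ(s_y)) = q_x`, then `h_LTL(s_x, q_x) ≤ c(s_x, s_y) + h_LTL(s_y, q_x)`. -/
theorem stmt2 {V L Q : Type*} [Fintype V] [Nonempty V] [Fintype L] [Fintype Q]
    (ℓ : V → L) (c : V → V → ℝ)
    (hc0 : ∀ s t : V, 0 ≤ c s t)
    (htri : ∀ s s' s'' : V, c s s' ≤ c s s'' + c s'' s')
    (T : Q → L → Q) (g : L → Q → ℝ) (hg0 : ∀ l q, 0 ≤ g l q)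
    (hLTL : V → Q → ℝ)
    (hdef : ∀ (s : V) (q : Q),
      hLTL s q = Finset.univ.inf' Finset.univ_nonempty
        (fun t : V => c s t + g (ℓ t) (T q (ℓ t))))
    (s_x s_y : V) (q_x : Q) (hstay : T q_x (ℓ s_y) = q_x) :
    hLTL s_x q_x ≤ c s_x s_y + hLTL s_y q_x :=
  stmt2_general ℓ c htri T g hLTL hdef s_x s_y q_x
end

section
/- The full consistency theorem for the LTL heuristic: for all nodes s_x, s_y ∈ V and automaton states q_x ∈ Q, letting q_y = T(q_x, ℓ(s_y)), it holds that h_LTL(s_x, q_x) ≤ c(s_x, s_y) + h_LTL(s_y, q_y). -/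
/-!
The minimum defining `h_LTL(s_x, q_x)` may be taken at `t = s_y`, so it is at most
`c(s_x, s_y) + g(ℓ(s_y), q_y)`. It remains to see `g(ℓ(s), q) ≤ h_LTL(s, q)`: for each `t`, the
Bellman equation at `l' = ℓ(t)` bounds `g(ℓ(s), q)` by `c_ℓ(ℓ(s), ℓ(t)) + g(ℓ(t), T(q, ℓ(t)))`,
and `c_ℓ(ℓ(s), ℓ(t)) ≤ c(s, t)`.
-/

open Finset

section LTLHeuristic

variable {V L Q : Type*} {ℓ : V → L} {c : V → V → ℝ} {T : Q → L → Q} {F : Set Q}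
  {cℓ : L → L → ℝ} {g : L → Q → ℝ} {hLTL : V → Q → ℝ}

theorem hLTL_le_of_notMem [Fintype V] [Nonempty V]
    (hhdef : ∀ s q, q ∉ F →
      hLTL s q = univ.inf' univ_nonempty (fun t : V => c s t + g (ℓ t) (T q (ℓ t))))
    {q : Q} (hq : q ∉ F) (s t : V) :
    hLTL s q ≤ c s t + g (ℓ t) (T q (ℓ t)) :=
  hhdef s q hq ▸ inf'_le _ (mem_univ t)

theorem hLTL_nonneg [Fintype V] [Nonempty V]
    (hc0 : ∀ s t, 0 ≤ c s t) (hg0 : ∀ l q, 0 ≤ g l q)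
    (hhF : ∀ s q, q ∈ F → hLTL s q = 0)
    (hhdef : ∀ s q, q ∉ F →
      hLTL s q = univ.inf' univ_nonempty (fun t : V => c s t + g (ℓ t) (T q (ℓ t))))
    (s : V) (q : Q) : 0 ≤ hLTL s q := by
  by_cases hq : q ∈ F
  · exact (hhF s q hq).ge
  · rw [hhdef s q hq]
    exact le_inf' _ _ fun t _ => add_nonneg (hc0 s t) (hg0 _ _)

theorem g_le_hLTL [Fintype V] [Nonempty V]
    (hcℓ : ∀ s t, cℓ (ℓ s) (ℓ t) ≤ c s t)
    (hgF : ∀ l q, q ∈ F → g l q = 0)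
    (hgBell : ∀ l q l', q ∉ F → g l q ≤ cℓ l l' + g l' (T q l'))
    (hhF : ∀ s q, q ∈ F → hLTL s q = 0)
    (hhdef : ∀ s q, q ∉ F →
      hLTL s q = univ.inf' univ_nonempty (fun t : V => c s t + g (ℓ t) (T q (ℓ t))))
    (s : V) (q : Q) : g (ℓ s) q ≤ hLTL s q := by
  by_cases hq : q ∈ F
  · rw [hhF s q hq, hgF _ q hq]
  · rw [hhdef s q hq]
    exact le_inf' _ _ fun t _ => (hgBell _ q (ℓ t) hq).trans (by linarith [hcℓ s t])

end LTLHeuristic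

theorem stmt4_general {V L Q : Type*} [Fintype V] [Nonempty V] [Fintype L] [Nonempty L]
    (ℓ : V → L)
    (c : V → V → ℝ)
    (hc0 : ∀ s t : V, 0 ≤ c s t)
    (T : Q → L → Q) (F : Set Q)
    (cℓ : L → L → ℝ)
    (hcℓ : ∀ l₁ l₂ : L,
      IsLeast {x : ℝ | ∃ s₁ s₂, ℓ s₁ = l₁ ∧ ℓ s₂ = l₂ ∧ c s₁ s₂ = x} (cℓ l₁ l₂))
    (g : L → Q → ℝ) (hg0 : ∀ l q, 0 ≤ g l q)
    (hgF : ∀ (l : L) (q : Q), q ∈ F → g l q = 0)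
    (hgBell : ∀ (l : L) (q : Q), q ∉ F →
      g l q = Finset.univ.inf' Finset.univ_nonempty
        (fun l' : L => cℓ l l' + g l' (T q l')))
    (hLTL : V → Q → ℝ)
    (hhF : ∀ (s : V) (q : Q), q ∈ F → hLTL s q = 0)
    (hhdef : ∀ (s : V) (q : Q), q ∉ F →
      hLTL s q = Finset.univ.inf' Finset.univ_nonempty
        (fun t : V => c s t + g (ℓ t) (T q (ℓ t)))) :
    ∀ (s_x s_y : V) (q_x : Q),
      hLTL s_x q_x ≤ c s_x s_y + hLTL s_y (T q_x (ℓ s_y)) := by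
  have hcℓ_le : ∀ s t, cℓ (ℓ s) (ℓ t) ≤ c s t := fun s t =>
    (hcℓ (ℓ s) (ℓ t)).2 ⟨s, t, rfl, rfl, rfl⟩
  have hgBell_le : ∀ l q l', q ∉ F → g l q ≤ cℓ l l' + g l' (T q l') := fun l q l' hq =>
    hgBell l q hq ▸ inf'_le _ (mem_univ l')
  intro s_x s_y q_x
  have hg_le := g_le_hLTL hcℓ_le hgF hgBell_le hhF hhdef s_y (T q_x (ℓ s_y))
  by_cases hx : q_x ∈ F
  · rw [hhF s_x q_x hx]
    exact add_nonneg (hc0 s_x s_y) (hLTL_nonneg hc0 hg0 hhF hhdef _ _)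
  · linarith [hLTL_le_of_notMem hhdef hx s_x s_y]

/-- Full consistency theorem for the LTL heuristic: for all nodes `s_x, s_y` and
automaton states `q_x`, letting `q_y = T(q_x, ℓ(s_y))`,
`h_LTL(s_x, q_x) ≤ c(s_x, s_y) + h_LTL(s_y, q_y)`. -/
theorem stmt4 {V L Q : Type*} [Fintype V] [Nonempty V] [Fintype L] [Nonempty L] [Fintype Q]
    (ℓ : V → L) (hsurj : Function.Surjective ℓ)
    (c : V → V → ℝ)
    (hc0 : ∀ s t : V, 0 ≤ c s t)
    (htri : ∀ s s' s'' : V, c s s' ≤ c s s'' + c s'' s')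
    (T : Q → L → Q) (F : Set Q)
    (cℓ : L → L → ℝ)
    (hcℓ : ∀ l₁ l₂ : L,
      IsLeast {x : ℝ | ∃ s₁ s₂, ℓ s₁ = l₁ ∧ ℓ s₂ = l₂ ∧ c s₁ s₂ = x} (cℓ l₁ l₂))
    (g : L → Q → ℝ) (hg0 : ∀ l q, 0 ≤ g l q)
    (hgF : ∀ (l : L) (q : Q), q ∈ F → g l q = 0)
    (hgBell : ∀ (l : L) (q : Q), q ∉ F →
      g l q = Finset.univ.inf' Finset.univ_nonempty
        (fun l' : L => cℓ l l' + g l' (T q l')))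
    (hLTL : V → Q → ℝ)
    (hhF : ∀ (s : V) (q : Q), q ∈ F → hLTL s q = 0)
    (hhdef : ∀ (s : V) (q : Q), q ∉ F →
      hLTL s q = Finset.univ.inf' Finset.univ_nonempty
        (fun t : V => c s t + g (ℓ t) (T q (ℓ t)))) :
    ∀ (s_x s_y : V) (q_x : Q),
      hLTL s_x q_x ≤ c s_x s_y + hLTL s_y (T q_x (ℓ s_y)) :=
  stmt4_general ℓ c hc0 T F cℓ hcℓ g hg0 hgF hgBell hLTL hhF hhdef
end

section
/- The LTL heuristic lower-bounds the optimal cost-to-goal in the product graph: for any path (s₁,q₁), ..., (s_T, q_T) in the product of the scene graph and automaton (with q_{t+1} = T(q_t, ℓ(s_{t+1})) and edges of cost c(s_t, s_{t+1})) ending at a state with q_T ∈ F, we have h_LTL(s₁, q₁) ≤ Σ_{t=1}^{T-1} c(s_t, s_{t+1}). -/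
/-!
Along a product path that reaches `F`, each transition `(s, q) → (t, T q (ℓ t))` outside `F`
costs `c s t ≥ c_ℓ (ℓ s) (ℓ t)`, so the Bellman equation makes `g ∘ ℓ` drop by at most the edge
cost at every step; by induction on the length, `g (ℓ s₀) q₀` is at most the path cost. The
heuristic `h_LTL` is one more such step, whose tail `g (ℓ s₁) q₁` is then bounded in the same way.
-/

open Finset

section ProductPath

variable {V L Q : Type*} (ℓ : V → L) (T : Q → L → Q) (F : Set Q) (c : V → V → ℝ)

def IsProductPath (n : ℕ) (s : ℕ → V) (q : ℕ → Q) : Prop :=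
  ∀ t < n, q (t + 1) = T (q t) (ℓ (s (t + 1)))

def pathCost (s : ℕ → V) (n : ℕ) : ℝ :=
  ∑ t ∈ range n, c (s t) (s (t + 1))

def LowerBoundsPathCost (φ : V → Q → ℝ) (n : ℕ) : Prop :=
  ∀ s q, IsProductPath ℓ T n s q → q n ∈ F → φ (s 0) (q 0) ≤ pathCost c s n

variable {ℓ T F c}

theorem IsProductPath.tail {n : ℕ} {s : ℕ → V} {q : ℕ → Q}
    (h : IsProductPath ℓ T (n + 1) s q) :
    IsProductPath ℓ T n (fun t => s (t + 1)) (fun t => q (t + 1)) :=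
  fun t ht => h (t + 1) (by omega)

theorem pathCost_succ (s : ℕ → V) (n : ℕ) :
    pathCost c s (n + 1) = c (s 0) (s 1) + pathCost c (fun t => s (t + 1)) n := by
  rw [pathCost, sum_range_succ', add_comm]
  rfl

theorem pathCost_nonneg (hc0 : ∀ s t, 0 ≤ c s t) (s : ℕ → V) (n : ℕ) : 0 ≤ pathCost c s n :=
  sum_nonneg fun _ _ => hc0 _ _

theorem lowerBoundsPathCost_zero {φ : V → Q → ℝ} (hφF : ∀ s q, q ∈ F → φ s q ≤ 0) :
    LowerBoundsPathCost ℓ T F c φ 0 :=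
  fun _ _ _ hF => hφF _ _ hF

theorem LowerBoundsPathCost.succ (hc0 : ∀ s t, 0 ≤ c s t) {φ ψ : V → Q → ℝ} {n : ℕ}
    (hφF : ∀ s q, q ∈ F → φ s q ≤ 0)
    (hφstep : ∀ s t q, q ∉ F → φ s q ≤ c s t + ψ t (T q (ℓ t)))
    (hψ : LowerBoundsPathCost ℓ T F c ψ n) :
    LowerBoundsPathCost ℓ T F c φ (n + 1) := by
  intro s q hpath hF
  by_cases hq0 : q 0 ∈ F
  · exact (hφF _ _ hq0).trans (pathCost_nonneg hc0 s _)
  calc φ (s 0) (q 0)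
      ≤ c (s 0) (s 1) + ψ (s 1) (q 1) := by
        rw [hpath 0 n.succ_pos]
        exact hφstep _ _ _ hq0
    _ ≤ c (s 0) (s 1) + pathCost c (fun t => s (t + 1)) n := by
        gcongr
        exact hψ _ _ hpath.tail hF
    _ = pathCost c s (n + 1) := (pathCost_succ s n).symm

theorem lowerBoundsPathCost_of_step (hc0 : ∀ s t, 0 ≤ c s t) {φ : V → Q → ℝ}
    (hφF : ∀ s q, q ∈ F → φ s q ≤ 0)
    (hφstep : ∀ s t q, q ∉ F → φ s q ≤ c s t + φ t (T q (ℓ t))) (n : ℕ) :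
    LowerBoundsPathCost ℓ T F c φ n := by
  induction n with
  | zero => exact lowerBoundsPathCost_zero hφF
  | succ n ih => exact ih.succ hc0 hφF hφstep

end ProductPath

theorem stmt7_general {V L Q : Type*} [Fintype V] [Nonempty V] [Fintype L] [Nonempty L]
    (ℓ : V → L)
    (c : V → V → ℝ)
    (hc0 : ∀ s t : V, 0 ≤ c s t)
    (T : Q → L → Q) (F : Set Q)
    (cℓ : L → L → ℝ)
    (hcℓ : ∀ l₁ l₂ : L,
      IsLeast {x : ℝ | ∃ s₁ s₂, ℓ s₁ = l₁ ∧ ℓ s₂ = l₂ ∧ c s₁ s₂ = x} (cℓ l₁ l₂))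
    (g : L → Q → ℝ)
    (hgF : ∀ (l : L) (q : Q), q ∈ F → g l q = 0)
    (hgBell : ∀ (l : L) (q : Q), q ∉ F →
      g l q = Finset.univ.inf' Finset.univ_nonempty
        (fun l' : L => cℓ l l' + g l' (T q l')))
    (hLTL : V → Q → ℝ)
    (hhF : ∀ (s : V) (q : Q), q ∈ F → hLTL s q = 0)
    (hhdef : ∀ (s : V) (q : Q), q ∉ F →
      hLTL s q = Finset.univ.inf' Finset.univ_nonempty
        (fun t : V => c s t + g (ℓ t) (T q (ℓ t)))) :
    ∀ (n : ℕ) (s : ℕ → V) (q : ℕ → Q),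
      (∀ t < n, q (t + 1) = T (q t) (ℓ (s (t + 1)))) → q n ∈ F →
      hLTL (s 0) (q 0) ≤ ∑ t ∈ Finset.range n, c (s t) (s (t + 1)) := by
  have hgℓF : ∀ s q, q ∈ F → g (ℓ s) q ≤ 0 := fun s q hq => (hgF _ _ hq).le
  have hgℓstep : ∀ s t q, q ∉ F → g (ℓ s) q ≤ c s t + g (ℓ t) (T q (ℓ t)) := fun s t q hq =>
    calc g (ℓ s) q ≤ cℓ (ℓ s) (ℓ t) + g (ℓ t) (T q (ℓ t)) :=
          (hgBell _ _ hq).trans_le (inf'_le _ (mem_univ _))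
      _ ≤ c s t + g (ℓ t) (T q (ℓ t)) := by
          gcongr
          exact (hcℓ _ _).2 ⟨s, t, rfl, rfl, rfl⟩
  have hhFle : ∀ s q, q ∈ F → hLTL s q ≤ 0 := fun s q hq => (hhF _ _ hq).le
  have hhstep : ∀ s t q, q ∉ F → hLTL s q ≤ c s t + g (ℓ t) (T q (ℓ t)) := fun s t q hq =>
    (hhdef _ _ hq).trans_le (inf'_le _ (mem_univ _))
  rintro (_ | n)
  · exact lowerBoundsPathCost_zero hhFle
  · exact (lowerBoundsPathCost_of_step hc0 hgℓF hgℓstep n).succ hc0 hhFle hhstep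

/-- The LTL heuristic lower-bounds the optimal cost-to-goal in the product graph:
for any product path `(s₁,q₁),…,(s_T,q_T)` with `q_{t+1} = T(q_t, ℓ(s_{t+1}))`
ending with `q_T ∈ F`, `h_LTL(s₁,q₁) ≤ Σ c(s_t, s_{t+1})`. -/
theorem stmt7 {V L Q : Type*} [Fintype V] [Nonempty V] [Fintype L] [Nonempty L] [Fintype Q]
    (ℓ : V → L) (hsurj : Function.Surjective ℓ)
    (c : V → V → ℝ)
    (hc0 : ∀ s t : V, 0 ≤ c s t)
    (htri : ∀ s s' s'' : V, c s s' ≤ c s s'' + c s'' s')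
    (T : Q → L → Q) (F : Set Q)
    (cℓ : L → L → ℝ)
    (hcℓ : ∀ l₁ l₂ : L,
      IsLeast {x : ℝ | ∃ s₁ s₂, ℓ s₁ = l₁ ∧ ℓ s₂ = l₂ ∧ c s₁ s₂ = x} (cℓ l₁ l₂))
    (g : L → Q → ℝ) (hg0 : ∀ l q, 0 ≤ g l q)
    (hgF : ∀ (l : L) (q : Q), q ∈ F → g l q = 0)
    (hgBell : ∀ (l : L) (q : Q), q ∉ F →
      g l q = Finset.univ.inf' Finset.univ_nonempty
        (fun l' : L => cℓ l l' + g l' (T q l')))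
    (hLTL : V → Q → ℝ)
    (hhF : ∀ (s : V) (q : Q), q ∈ F → hLTL s q = 0)
    (hhdef : ∀ (s : V) (q : Q), q ∉ F →
      hLTL s q = Finset.univ.inf' Finset.univ_nonempty
        (fun t : V => c s t + g (ℓ t) (T q (ℓ t)))) :
    ∀ (n : ℕ) (s : ℕ → V) (q : ℕ → Q),
      (∀ t < n, q (t + 1) = T (q t) (ℓ (s (t + 1)))) → q n ∈ F →
      hLTL (s 0) (q 0) ≤ ∑ t ∈ Finset.range n, c (s t) (s (t + 1)) :=
  stmt7_general ℓ c hc0 T F cℓ hcℓ g hgF hgBell hLTL hhF hhdef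
end
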